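/- The expansion of 8δ2 in the variable q^{1/2} = e^{πiτ} begins 8δ2(τ) = -1 - 24q^{1/2} - 24q - 96q^{3/2} + ⋯; precisely, 8δ2 is a holomorphic function of t = q^{1/2} on the punctured unit disc extending holomorphically to t = 0, and its Taylor coefficients at t = 0 in degrees 0, 1, 2, 3 are -1, -24, -24 and -96 respectively. -/

import Mathlib

open Complex Real

/-- The nome `q = e^{2πiτ}`. -/
noncomputable def qq (τ : ℂ) : ℂ := Complex.exp (2 * π * Complex.I * τ)

/-- The half-nome `q^{1/2} = e^{πiτ}`. -/
noncomputable def qh (τ : ℂ) : ℂ := Complex.exp (π * Complex.I * τ)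

/-- The Jacobi theta constant `θ₁(0,τ) = 2 q^{1/8} ∏_{j≥1} (1-q^j)(1+q^j)^2`. -/
noncomputable def theta1 (τ : ℂ) : ℂ :=
  2 * Complex.exp (π * Complex.I * τ / 4) *
    ∏' j : ℕ, ((1 - qq τ ^ (j + 1)) * (1 + qq τ ^ (j + 1)) ^ 2)

/-- The Jacobi theta constant `θ₂(0,τ) = ∏_{j≥1} (1-q^j)(1-q^{j-1/2})^2`. -/
noncomputable def theta2 (τ : ℂ) : ℂ :=
  ∏' j : ℕ, ((1 - qq τ ^ (j + 1)) * (1 - qh τ ^ (2 * j + 1)) ^ 2)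

/-- The Jacobi theta constant `θ₃(0,τ) = ∏_{j≥1} (1-q^j)(1+q^{j-1/2})^2`. -/
noncomputable def theta3 (τ : ℂ) : ℂ :=
  ∏' j : ℕ, ((1 - qq τ ^ (j + 1)) * (1 + qh τ ^ (2 * j + 1)) ^ 2)

/-- `δ₂(τ) = -(θ₁(0,τ)⁴ + θ₃(0,τ)⁴)/8`. -/
noncomputable def delta2 (τ : ℂ) : ℂ := -(theta1 τ ^ 4 + theta3 τ ^ 4) / 8

/-!
With `t = q^{1/2}` we have `θ₁⁴ = 16 t P₁(t)⁴` and `θ₃⁴ = P₃(t)⁴`, where `P₁` and `P₃` (`thetaProd`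
with `m j = 2j + 2`, resp. `2j + 1`) are infinite products of factors `1 + O(t^{2j+1})`. Such
products are holomorphic on the unit disc, and a product of factors `1 + O(t^{j+n})` is
`1 + O(tⁿ)` (from `‖∏ (1 + aⱼ) - 1‖ ≤ exp (∑ ‖aⱼ‖) - 1`). Hence modulo `t⁴` only the first two
factors of each product count: `P₁ ≡ 1 + t²` and `P₃ ≡ 1 + 2t`, so
`8δ₂ = -(16 t P₁⁴ + P₃⁴) ≡ -1 - 24t - 24t² - 96t³`. An analytic function that is `O(t⁴)` at `0`
has analytic order at least `4` there, so this congruence determines the Taylor coefficients of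
degree `< 4`.
-/

open Filter Topology Asymptotics Finset Metric

section TaylorCoefficients

variable {𝕜 : Type*} [NontriviallyNormedField 𝕜]

theorem natCast_le_analyticOrderAt_of_isBigO {f : 𝕜 → 𝕜} {z₀ : 𝕜} {n : ℕ}
    (hf : AnalyticAt 𝕜 f z₀) (h : f =O[𝓝 z₀] fun z => (z - z₀) ^ n) :
    (n : ℕ∞) ≤ analyticOrderAt f z₀ := by
  by_contra! hlt
  obtain ⟨m, hm⟩ := ENat.ne_top_iff_exists.mp (hlt.trans_le le_top).ne
  rw [← hm, Nat.cast_lt] at hlt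
  obtain ⟨g, hg, hg0, hfg⟩ := hf.analyticOrderAt_eq_natCast.mp hm.symm
  have hgO : g =O[𝓝[≠] z₀] fun z => (z - z₀) ^ (n - m) := by
    obtain ⟨c, hc⟩ := h.bound
    refine IsBigO.of_bound c ?_
    filter_upwards [self_mem_nhdsWithin, (hc.and hfg).filter_mono nhdsWithin_le_nhds]
      with z hz ⟨hcz, hfz⟩
    have hpos : 0 < ‖z - z₀‖ ^ m := pow_pos (norm_pos_iff.2 (sub_ne_zero.2 hz)) m
    rw [hfz, smul_eq_mul, norm_mul, norm_pow, norm_pow, ← Nat.sub_add_cancel hlt.le,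
      pow_add, ← mul_assoc, mul_comm] at hcz
    rw [norm_pow]
    exact le_of_mul_le_mul_right hcz hpos
  have hpow : Tendsto (fun z => (z - z₀) ^ (n - m)) (𝓝[≠] z₀) (𝓝 0) := by
    have : Continuous fun z : 𝕜 => (z - z₀) ^ (n - m) := by fun_prop
    simpa [zero_pow (Nat.sub_ne_zero_of_lt hlt)] using
      (this.tendsto z₀).mono_left nhdsWithin_le_nhds
  exact hg0 (tendsto_nhds_unique (hg.continuousAt.tendsto.mono_left nhdsWithin_le_nhds)
    (hgO.trans_tendsto hpow))

theorem iteratedDeriv_sum_mul_pow_zero {n : ℕ} (c : Fin n → 𝕜) (i : Fin n) :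
    iteratedDeriv i (fun z => ∑ k, c k * z ^ (k : ℕ)) 0 = i.val.factorial * c i := by
  rw [iteratedDeriv_fun_sum fun k _ => by fun_prop]
  simp only [iteratedDeriv_const_mul_field, iteratedDeriv_fun_pow_zero, Fin.val_inj]
  simp [mul_comm]

theorem AnalyticAt.iteratedDeriv_div_factorial_eq_of_isBigO [CharZero 𝕜] [CompleteSpace 𝕜]
    {f : 𝕜 → 𝕜} {n : ℕ} (hf : AnalyticAt 𝕜 f 0) (c : Fin n → 𝕜)
    (h : (fun z => f z - ∑ k, c k * z ^ (k : ℕ)) =O[𝓝 0] (· ^ n)) (i : Fin n) :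
    iteratedDeriv i f 0 / i.val.factorial = c i := by
  have hp : AnalyticAt 𝕜 (fun z => ∑ k, c k * z ^ (k : ℕ)) 0 := by fun_prop
  have horder := natCast_le_analyticOrderAt_of_isBigO (hf.fun_sub hp) (by simpa using h)
  rw [natCast_le_analyticOrderAt_iff_iteratedDeriv_eq_zero (hf.fun_sub hp)] at horder
  have hi := horder i i.isLt
  rw [iteratedDeriv_fun_sub hf.contDiffAt hp.contDiffAt, sub_eq_zero,
    iteratedDeriv_sum_mul_pow_zero] at hi
  rw [hi, mul_div_cancel_left₀ _ (by exact_mod_cast i.val.factorial_ne_zero)]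

end TaylorCoefficients

theorem isBigO_pow_sub_pow {α 𝕜 : Type*} [TopologicalSpace α] [NormedField 𝕜] {f g : α → 𝕜}
    {x : α} {u : α → 𝕜} (hf : ContinuousAt f x) (hg : ContinuousAt g x)
    (h : (fun t => f t - g t) =O[𝓝 x] u) (m : ℕ) :
    (fun t => f t ^ m - g t ^ m) =O[𝓝 x] u := by
  have hgeom : ContinuousAt (fun t => ∑ i ∈ range m, f t ^ i * g t ^ (m - 1 - i)) x := by
    fun_prop
  simpa [geom_sum₂_mul] using (hgeom.tendsto.isBigO_one 𝕜).mul h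

theorem isBigO_sub_of_eq_add_pow_mul {𝕜 : Type*} [NormedField 𝕜] {F P Q R : 𝕜 → 𝕜} {n : ℕ}
    (h : (fun t => F t - P t) =O[𝓝 0] (· ^ n)) (hPQ : ∀ t, P t = Q t + t ^ n * R t)
    (hR : ContinuousAt R 0) : (fun t => F t - Q t) =O[𝓝 0] (· ^ n) := by
  have hRn : (fun t => t ^ n * R t) =O[𝓝 0] (· ^ n) := by
    simpa using (isBigO_refl (· ^ n) (𝓝 (0 : 𝕜))).mul (hR.tendsto.isBigO_one 𝕜)
  exact (h.add hRn).congr_left fun t => by rw [hPQ]; ring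

theorem norm_tprod_one_add_sub_one_le {ι R : Type*} [NormedCommRing R] [NormOneClass R]
    [CompleteSpace R] {f : ι → R} (hf : Summable fun i => ‖f i‖) :
    ‖∏' i, (1 + f i) - 1‖ ≤ Real.exp (∑' i, ‖f i‖) - 1 := by
  have hlim : Tendsto (fun s => ‖∏ i ∈ s, (1 + f i) - 1‖) atTop (𝓝 ‖∏' i, (1 + f i) - 1‖) :=
    ((multipliable_one_add_of_summable hf).hasProd.sub_const 1).norm
  refine le_of_tendsto' hlim fun s => (s.norm_prod_one_add_sub_one_le f).trans ?_
  gcongr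
  exact hf.sum_le_tsum s fun i _ => norm_nonneg _

theorem Real.exp_sub_one_le_mul_exp (x : ℝ) : Real.exp x - 1 ≤ x * Real.exp x := by
  nlinarith [Real.one_sub_le_exp_neg x, Real.exp_pos x, Real.exp_neg x,
    mul_inv_cancel₀ (Real.exp_ne_zero x)]

section ProductsOnDisc

variable {f : ℕ → ℂ → ℂ} {C : ℝ} {n : ℕ}

theorem nonneg_of_norm_sub_one_le (hf : ∀ j t, ‖t‖ < 1 → ‖f j t - 1‖ ≤ C * ‖t‖ ^ (j + n)) :
    0 ≤ C :=
  nonneg_of_mul_nonneg_left ((norm_nonneg _).trans (hf 0 (1 / 2) (by norm_num))) (by norm_num)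

theorem summable_norm_sub_one_of_norm_sub_one_le
    (hf : ∀ j t, ‖t‖ < 1 → ‖f j t - 1‖ ≤ C * ‖t‖ ^ (j + n)) {t : ℂ} (ht : ‖t‖ < 1) :
    Summable fun j => ‖f j t - 1‖ := by
  refine Summable.of_nonneg_of_le (fun _ => norm_nonneg _) (fun j => hf j t ht) ?_
  simp_rw [pow_add]
  exact ((summable_geometric_of_lt_one (norm_nonneg t) ht).mul_right _).mul_left C

theorem differentiableOn_tprod_of_norm_sub_one_le
    (hf : ∀ j t, ‖t‖ < 1 → ‖f j t - 1‖ ≤ C * ‖t‖ ^ (j + n))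
    (hd : ∀ j, DifferentiableOn ℂ (f j) (ball 0 1)) :
    DifferentiableOn ℂ (fun t => ∏' j, f j t) (ball 0 1) := by
  have hC := nonneg_of_norm_sub_one_le hf
  intro x hx
  rw [mem_ball_zero_iff] at hx
  obtain ⟨r, hxr, hr⟩ := exists_between hx
  have hr0 : 0 ≤ r := (norm_nonneg x).trans hxr.le
  have hsub : ball (0 : ℂ) r ⊆ ball 0 1 := ball_subset_ball hr.le
  have hbound : ∀ j, ∀ t ∈ ball (0 : ℂ) r, ‖f j t - 1‖ ≤ C * r ^ n * r ^ j := fun j t ht => by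
    rw [mem_ball_zero_iff] at ht
    calc ‖f j t - 1‖ ≤ C * ‖t‖ ^ (j + n) := hf j t (ht.trans hr)
      _ ≤ C * r ^ (j + n) := by gcongr
      _ = C * r ^ n * r ^ j := by ring
  have hprod := Summable.hasProdLocallyUniformlyOn_nat_one_add (f := fun j t => f j t - 1)
    isOpen_ball ((summable_geometric_of_lt_one hr0 hr).mul_left _) (.of_forall hbound)
    (fun j => ((hd j).mono hsub).continuousOn.sub continuousOn_const)
  simp only [add_sub_cancel] at hprod
  have hdiff := hprod.differentiableOn (.of_forall fun s =>
    DifferentiableOn.fun_finsetProd fun j _ => (hd j).mono hsub) isOpen_ball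
  exact (hdiff.differentiableAt (isOpen_ball.mem_nhds (by
    rwa [mem_ball_zero_iff]))).differentiableWithinAt

theorem isBigO_tprod_sub_one (hf : ∀ j t, ‖t‖ < 1 → ‖f j t - 1‖ ≤ C * ‖t‖ ^ (j + n)) :
    (fun t => ∏' j, f j t - 1) =O[𝓝 0] (· ^ n) := by
  have hC := nonneg_of_norm_sub_one_le hf
  refine IsBigO.of_bound (2 * C * Real.exp (2 * C)) ?_
  filter_upwards [ball_mem_nhds (0 : ℂ) (by norm_num : (0 : ℝ) < 1 / 2)] with t ht
  rw [mem_ball_zero_iff] at ht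
  have hsum := summable_norm_sub_one_of_norm_sub_one_le hf (t := t) (by linarith)
  have htn : ‖t‖ ^ n ≤ 1 := pow_le_one₀ (norm_nonneg t) (by linarith)
  have hS : ∑' j, ‖f j t - 1‖ ≤ 2 * C * ‖t‖ ^ n :=
    calc ∑' j, ‖f j t - 1‖ ≤ ∑' j, C * ‖t‖ ^ n * ‖t‖ ^ j := by
          refine hsum.tsum_le_tsum (fun j => (hf j t (by linarith)).trans_eq (by ring)) ?_
          exact (summable_geometric_of_lt_one (norm_nonneg t) (by linarith)).mul_left _
      _ = C * ‖t‖ ^ n * (1 - ‖t‖)⁻¹ := by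
          rw [tsum_mul_left, tsum_geometric_of_lt_one (norm_nonneg t) (by linarith)]
      _ ≤ C * ‖t‖ ^ n * 2 := by
          gcongr
          rw [inv_le_comm₀ (by linarith) two_pos]
          linarith
      _ = 2 * C * ‖t‖ ^ n := by ring
  have hprod := norm_tprod_one_add_sub_one_le hsum
  simp only [add_sub_cancel] at hprod
  rw [norm_pow]
  calc ‖∏' j, f j t - 1‖ ≤ Real.exp (∑' j, ‖f j t - 1‖) - 1 := hprod
    _ ≤ (∑' j, ‖f j t - 1‖) * Real.exp (∑' j, ‖f j t - 1‖) := Real.exp_sub_one_le_mul_exp _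
    _ ≤ 2 * C * ‖t‖ ^ n * Real.exp (2 * C) := by gcongr; nlinarith
    _ = 2 * C * Real.exp (2 * C) * ‖t‖ ^ n := by ring

theorem isBigO_tprod_sub_prod_range {k : ℕ}
    (hcont : ∀ j, ContinuousAt (f j) 0)
    (hf : ∀ j t, ‖t‖ < 1 → ‖f (j + k) t - 1‖ ≤ C * ‖t‖ ^ (j + n)) :
    (fun t => ∏' j, f j t - ∏ j ∈ range k, f j t) =O[𝓝 0] (· ^ n) := by
  have hP : ContinuousAt (fun t => ∏ j ∈ range k, f j t) 0 := by fun_prop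
  have hsplit : ∀ᶠ t in 𝓝 0,
      (∏ j ∈ range k, f j t) * (∏' j, f (j + k) t - 1) = ∏' j, f j t - ∏ j ∈ range k, f j t := by
    filter_upwards [ball_mem_nhds (0 : ℂ) one_pos] with t ht
    have hmul : Multipliable fun j => f (j + k) t := by
      simpa using multipliable_one_add_of_summable
        (summable_norm_sub_one_of_norm_sub_one_le hf (mem_ball_zero_iff.mp ht))
    rw [mul_sub, mul_one, hmul.prod_mul_tprod_nat_mul']
  simpa using ((hP.tendsto.isBigO_one ℂ).mul (isBigO_tprod_sub_one hf)).congr' hsplit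
    (.of_forall fun _ => rfl)

end ProductsOnDisc

lemma norm_one_sub_mul_one_add_sq_sub_one_le {a b : ℂ} {x : ℝ} (ha : ‖a‖ ≤ x) (hb : ‖b‖ ≤ x)
    (hx : x ≤ 1) : ‖(1 - a) * (1 + b) ^ 2 - 1‖ ≤ 7 * x := by
  have h2b : ‖2 + b‖ ≤ 3 := (norm_add_le _ _).trans (by norm_num; linarith)
  have h1b : ‖1 + b‖ ≤ 2 := (norm_add_le _ _).trans (by norm_num; linarith)
  calc ‖(1 - a) * (1 + b) ^ 2 - 1‖ = ‖b * (2 + b) - a * (1 + b) ^ 2‖ := by congr 1; ring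
    _ ≤ ‖b‖ * ‖2 + b‖ + ‖a‖ * ‖1 + b‖ ^ 2 := by
        rw [← norm_mul, ← norm_pow, ← norm_mul]; exact norm_sub_le _ _
    _ ≤ x * 3 + x * 2 ^ 2 := by gcongr <;> linarith [norm_nonneg b]
    _ = 7 * x := by ring

noncomputable def thetaProd (m : ℕ → ℕ) (t : ℂ) : ℂ :=
  ∏' j : ℕ, (1 - t ^ (2 * j + 2)) * (1 + t ^ m j) ^ 2

section ThetaProd

variable {m : ℕ → ℕ}

lemma norm_thetaFactor_sub_one_le (hm : ∀ j, 2 * j + 1 ≤ m j) {j k : ℕ} (hk : k ≤ 2 * j + 1)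
    {t : ℂ} (ht : ‖t‖ ≤ 1) : ‖(1 - t ^ (2 * j + 2)) * (1 + t ^ m j) ^ 2 - 1‖ ≤ 7 * ‖t‖ ^ k := by
  refine norm_one_sub_mul_one_add_sq_sub_one_le ?_ ?_ (pow_le_one₀ (norm_nonneg t) ht) <;>
    rw [norm_pow] <;> exact pow_le_pow_of_le_one (norm_nonneg t) ht (by have := hm j; omega)

lemma differentiableOn_thetaProd (hm : ∀ j, 2 * j + 1 ≤ m j) :
    DifferentiableOn ℂ (thetaProd m) (ball 0 1) :=
  differentiableOn_tprod_of_norm_sub_one_le (n := 1)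
    (fun j t ht => norm_thetaFactor_sub_one_le hm (by omega) ht.le) (fun j => by fun_prop)

lemma continuousAt_thetaProd (hm : ∀ j, 2 * j + 1 ≤ m j) : ContinuousAt (thetaProd m) 0 :=
  (differentiableOn_thetaProd hm).continuousOn.continuousAt (ball_mem_nhds 0 one_pos)

lemma isBigO_thetaProd_sub_prod_range_two (hm : ∀ j, 2 * j + 1 ≤ m j) :
    (fun t => thetaProd m t - ∏ j ∈ range 2, (1 - t ^ (2 * j + 2)) * (1 + t ^ m j) ^ 2)
      =O[𝓝 0] (· ^ 4) :=
  isBigO_tprod_sub_prod_range (C := 7) (fun j => by fun_prop)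
    (fun j t ht => norm_thetaFactor_sub_one_le hm (by omega) ht.le)

end ThetaProd

lemma isBigO_thetaProd_even_sub :
    (fun t => thetaProd (fun j => 2 * j + 2) t - (1 + t ^ 2)) =O[𝓝 0] (· ^ 4) :=
  isBigO_sub_of_eq_add_pow_mul (isBigO_thetaProd_sub_prod_range_two fun j => by omega)
    (R := fun t => -2 * t ^ 4 - 2 * t ^ 6 + t ^ 12 + t ^ 14)
    (fun t => by simp only [prod_range_succ, prod_range_zero]; ring) (by fun_prop)

lemma isBigO_thetaProd_odd_sub :
    (fun t => thetaProd (fun j => 2 * j + 1) t - (1 + 2 * t)) =O[𝓝 0] (· ^ 4) :=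
  isBigO_sub_of_eq_add_pow_mul (isBigO_thetaProd_sub_prod_range_two fun j => by omega)
    (R := fun t =>
      2 - 2 * t - 3 * t ^ 2 - 3 * t ^ 4 - 2 * t ^ 5 + 2 * t ^ 6 + 2 * t ^ 9 + t ^ 10)
    (fun t => by simp only [prod_range_succ, prod_range_zero]; ring) (by fun_prop)

lemma qq_eq_qh_sq (τ : ℂ) : qq τ = qh τ ^ 2 := by
  rw [qq, qh, ← Complex.exp_nat_mul]
  congr 1
  push_cast
  ring

lemma theta1_eq (τ : ℂ) :
    theta1 τ =
      2 * Complex.exp (π * Complex.I * τ / 4) * thetaProd (fun j => 2 * j + 2) (qh τ) := by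
  simp only [theta1, thetaProd, qq_eq_qh_sq, ← pow_mul, mul_add, mul_one]

lemma theta3_eq (τ : ℂ) : theta3 τ = thetaProd (fun j => 2 * j + 1) (qh τ) := by
  simp only [theta3, thetaProd, qq_eq_qh_sq, ← pow_mul, mul_add, mul_one]

noncomputable def eightDelta2Halfq (t : ℂ) : ℂ :=
  -(16 * t * thetaProd (fun j => 2 * j + 2) t ^ 4 + thetaProd (fun j => 2 * j + 1) t ^ 4)

lemma eight_mul_delta2_eq (τ : ℂ) : 8 * delta2 τ = eightDelta2Halfq (qh τ) := by
  have hq : Complex.exp (π * Complex.I * τ / 4) ^ 4 = qh τ := by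
    rw [← Complex.exp_nat_mul, qh]
    congr 1
    push_cast
    ring
  rw [delta2, theta1_eq, theta3_eq, eightDelta2Halfq, mul_pow, mul_pow, hq]
  ring

lemma differentiableOn_eightDelta2Halfq : DifferentiableOn ℂ eightDelta2Halfq (ball 0 1) := by
  have h1 := differentiableOn_thetaProd (m := fun j => 2 * j + 2) fun j => by omega
  have h3 := differentiableOn_thetaProd (m := fun j => 2 * j + 1) fun j => by omega
  unfold eightDelta2Halfq
  fun_prop

lemma isBigO_eightDelta2Halfq :
    (fun t => eightDelta2Halfq t - ∑ k : Fin 4, ![-1, -24, -24, -96] k * t ^ (k : ℕ))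
      =O[𝓝 0] (· ^ 4) := by
  have h1 := isBigO_pow_sub_pow (g := fun t => 1 + t ^ 2)
    (continuousAt_thetaProd fun j => by omega) (by fun_prop) isBigO_thetaProd_even_sub 4
  have h3 := isBigO_pow_sub_pow (g := fun t => 1 + 2 * t)
    (continuousAt_thetaProd fun j => by omega) (by fun_prop) isBigO_thetaProd_odd_sub 4
  have ht1 : (fun t => t * (thetaProd (fun j => 2 * j + 2) t ^ 4 - (1 + t ^ 2) ^ 4))
      =O[𝓝 0] (· ^ 4) := by
    simpa using (continuousAt_id.tendsto.isBigO_one ℂ).mul h1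
  refine isBigO_sub_of_eq_add_pow_mul
    (P := fun t => -(16 * t * (1 + t ^ 2) ^ 4 + (1 + 2 * t) ^ 4))
    (R := fun t => -(16 + 96 * t + 64 * t ^ 3 + 16 * t ^ 5)) ?_ (fun t => ?_) (by fun_prop)
  · exact ((ht1.const_mul_left (-16)).sub h3).congr_left fun t => by
      simp only [eightDelta2Halfq]
      ring
  · simp only [Fin.sum_univ_four, Matrix.cons_val, Fin.coe_ofNat_eq_mod, Nat.reduceMod]
    ring

/-- The expansion of `8δ₂` in the variable `t = q^{1/2} = e^{πiτ}` begins
`8δ₂ = -1 - 24q^{1/2} - 24q - 96q^{3/2} + ⋯`: `8δ₂` is a holomorphic function of `t` on the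
punctured unit disc extending holomorphically to `t = 0`, and its Taylor coefficients at `t = 0`
in degrees `0`, `1`, `2`, `3` are `-1`, `-24`, `-24`, `-96`. -/
theorem eight_delta2_halfq_expansion :
    ∃ g : ℂ → ℂ, DifferentiableOn ℂ g (Metric.ball (0 : ℂ) 1) ∧
      (∀ τ : ℂ, 0 < τ.im → g (qh τ) = 8 * delta2 τ) ∧
      g 0 = -1 ∧
      iteratedDeriv 1 g 0 / (Nat.factorial 1 : ℂ) = -24 ∧
      iteratedDeriv 2 g 0 / (Nat.factorial 2 : ℂ) = -24 ∧
      iteratedDeriv 3 g 0 / (Nat.factorial 3 : ℂ) = -96 := by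
  have htaylor := (differentiableOn_eightDelta2Halfq.analyticAt (ball_mem_nhds 0 one_pos)
    ).iteratedDeriv_div_factorial_eq_of_isBigO _ isBigO_eightDelta2Halfq
  refine ⟨eightDelta2Halfq, differentiableOn_eightDelta2Halfq,
    fun τ _ => (eight_mul_delta2_eq τ).symm, ?_, htaylor 1, htaylor 2, htaylor 3⟩
  simpa using htaylor 0
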